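/- Let X = {0,1}^ℤ with the product topology, τ the shift map, f_0 = τ and f_1 = τ^{−1}. Let U = {ξ ∈ X : ξ_{−1} = ξ_0 = ξ_1 = 0} and V = {ξ ∈ X : ξ_{−1} = ξ_0 = ξ_1 = 1}. Then for every finite nonempty word w over {0,1} that occurs as a subword of some bi-infinite concatenation of the blocks 01 and 10 (equivalently, the number of 0's and the number of 1's in w differ by at most 1 when w is built from partial and full blocks, so that f_w ∈ {id, τ, τ^{−1}}), one has f_w^{−1}(U) ∩ V = ∅. In particular, the IFS (X, {τ, τ^{−1}}, Σ), where Σ is the shift of finite type generated by the blocks 01 and 10, is neither point transitive nor topologically transitive. -/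
import Mathlib

/-- `applyWord F u x` is `f_u(x) = f_{u_n} ∘ ⋯ ∘ f_{u_1} (x)` for the word `u = u_1 ⋯ u_n`. -/
def applyWord {X : Type*} {k : ℕ} (F : Fin k → X → X) : List (Fin k) → X → X
  | [], x => x
  | a :: u, x => applyWord F u (F a x)

/-- The shift map `τ` on two-sided binary sequences. -/
def tauZ (ξ : ℤ → Fin 2) : ℤ → Fin 2 := fun n => ξ (n + 1)

/-- The inverse shift `τ⁻¹`. -/
def tauZInv (ξ : ℤ → Fin 2) : ℤ → Fin 2 := fun n => ξ (n - 1)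

/-- `f_0 = τ`, `f_1 = τ⁻¹`. -/
def shiftIFS : Fin 2 → (ℤ → Fin 2) → (ℤ → Fin 2) :=
  fun i => if i = 0 then tauZ else tauZInv

/-- `ξ` is a bi-infinite concatenation of the blocks `01` and `10`: for some phase `r`,
every block `ξ(2n+r) ξ(2n+r+1)` consists of two distinct symbols. -/
def isBlockConcat (ξ : ℤ → Fin 2) : Prop :=
  ∃ r : ℤ, ∀ n : ℤ, ξ (2 * n + r) ≠ ξ (2 * n + r + 1)

/-- The word `w` occurs in the two-sided sequence `ξ`. -/
def occursInZ (w : List (Fin 2)) (ξ : ℤ → Fin 2) : Prop :=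
  ∃ m : ℤ, ∀ i : Fin w.length, w.get i = ξ (m + (i : ℕ))

/-- The central cylinder `[000]` around positions `-1, 0, 1`. -/
def cylU : Set (ℤ → Fin 2) := {ξ | ξ (-1) = 0 ∧ ξ 0 = 0 ∧ ξ 1 = 0}

/-- The central cylinder `[111]` around positions `-1, 0, 1`. -/
def cylV : Set (ℤ → Fin 2) := {ξ | ξ (-1) = 1 ∧ ξ 0 = 1 ∧ ξ 1 = 1}

/-! ### Auxiliary lemmas -/

/-- The exponent `#0's − #1's` of a word. -/
def ew : List (Fin 2) → ℤ
  | [] => 0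
  | a :: u => (if a = 0 then 1 else -1) + ew u

lemma applyWord_shift (w : List (Fin 2)) (x : ℤ → Fin 2) :
    applyWord shiftIFS w x = fun n => x (n + ew w) := by
  induction w generalizing x with
  | nil => funext n; simp [applyWord, ew]
  | cons a u ih =>
    funext n
    show applyWord shiftIFS u (shiftIFS a x) n = _
    rw [ih]
    by_cases h : a = 0
    · simp only [shiftIFS, h, if_true, eq_self_iff_true, if_pos, tauZ, ew]
      congr 1; ring
    · simp only [shiftIFS, if_neg h, tauZInv, ew]
      congr 1; ring

/-- Partial sums of the ±1 sequence attached to `ξ`. -/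
def hsum (ξ : ℤ → Fin 2) : ℕ → ℤ → ℤ
  | 0, _ => 0
  | L + 1, m => (if ξ m = 0 then 1 else -1) + hsum ξ L (m + 1)

lemma ew_eq_hsum (ξ : ℤ → Fin 2) (w : List (Fin 2)) (m : ℤ)
    (h : ∀ i : Fin w.length, w.get i = ξ (m + (i : ℕ))) :
    ew w = hsum ξ w.length m := by
  induction w generalizing m with
  | nil => simp [ew, hsum]
  | cons a u ih =>
    have h0 : a = ξ m := by simpa using h ⟨0, by simp⟩
    have ht : ∀ i : Fin u.length, u.get i = ξ ((m + 1) + (i : ℕ)) := by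
      intro i
      have := h ⟨i + 1, by simp [Nat.succ_lt_succ i.isLt]⟩
      simpa [add_assoc, add_comm, add_left_comm] using this
    show (if a = 0 then (1:ℤ) else -1) + ew u = (if ξ m = 0 then (1:ℤ) else -1) + hsum ξ u.length (m+1)
    rw [h0, ih _ ht]

lemma hsum_le_one (ξ : ℤ → Fin 2) (r : ℤ) (hb : ∀ n : ℤ, ξ (2 * n + r) ≠ ξ (2 * n + r + 1)) :
    ∀ L m, (∃ n : ℤ, m = 2 * n + r) → |hsum ξ L m| ≤ 1 := by
  intro L
  induction L using Nat.strong_induction_on with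
  | _ L ih =>
    match L with
    | 0 => intro m _; simp [hsum]
    | 1 =>
      intro m _
      show |(if ξ m = 0 then (1:ℤ) else -1) + hsum ξ 0 (m+1)| ≤ 1
      by_cases h : ξ m = 0 <;> simp [h, hsum]
    | (L + 2) =>
      rintro m ⟨n, rfl⟩
      have hne := hb n
      have key : (if ξ (2*n+r) = 0 then (1:ℤ) else -1) + (if ξ (2*n+r+1) = 0 then (1:ℤ) else -1) = 0 := by
        by_cases h : ξ (2*n+r) = 0
        · have h2 : ¬ ξ (2*n+r+1) = 0 := by rw [h] at hne; exact fun hc => hne hc.symm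
          simp [h, h2]
        · have h2 : ξ (2*n+r+1) = 0 := by
            have := Fin.exists_fin_two.mp ⟨ξ (2*n+r+1), rfl⟩
            omega
          simp [h, h2]
      have expand : hsum ξ (L+2) (2*n+r) =
          (if ξ (2*n+r) = 0 then (1:ℤ) else -1) + ((if ξ (2*n+r+1) = 0 then (1:ℤ) else -1)
            + hsum ξ L (2*n+r+1+1)) := rfl
      have h3 : hsum ξ (L+2) (2*n+r) = hsum ξ L (2*(n+1)+r) := by
        rw [expand, ← add_assoc, key, zero_add]
        congr 1; ring
      rw [h3]
      exact ih L (by omega) _ ⟨n+1, rfl⟩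

lemma hsum_le_two (ξ : ℤ → Fin 2) (r : ℤ) (hb : ∀ n : ℤ, ξ (2 * n + r) ≠ ξ (2 * n + r + 1)) :
    ∀ L m, |hsum ξ L m| ≤ 2 := by
  intro L m
  rcases Int.even_or_odd (m - r) with ⟨n, hn⟩ | ⟨n, hn⟩
  · have h1 := hsum_le_one ξ r hb L m ⟨n, by omega⟩
    omega
  · match L with
    | 0 => simp [hsum]
    | L + 1 =>
      have h1 := hsum_le_one ξ r hb L (m + 1) ⟨n + 1, by omega⟩
      show |(if ξ m = 0 then (1:ℤ) else -1) + hsum ξ L (m+1)| ≤ 2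
      rw [abs_le] at h1 ⊢
      by_cases h : ξ m = 0 <;> simp [h] <;> omega

lemma ew_bound (w : List (Fin 2)) (hw : ∃ ξ : ℤ → Fin 2, isBlockConcat ξ ∧ occursInZ w ξ) :
    |ew w| ≤ 2 := by
  obtain ⟨ξ, ⟨r, hb⟩, ⟨m, ho⟩⟩ := hw
  rw [ew_eq_hsum ξ w m ho]
  exact hsum_le_two ξ r hb _ _

/-- The central contradiction: a word of the language cannot map a point of `cylV` into
`cylU`. -/
lemma core (x : ℤ → Fin 2) (e : ℤ) (he : |e| ≤ 2)
    (hU : x (-1 + e) = 0 ∧ x (0 + e) = 0 ∧ x (1 + e) = 0)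
    (hV : x (-1) = 1 ∧ x 0 = 1 ∧ x 1 = 1) : False := by
  obtain ⟨u1, u2, u3⟩ := hU
  obtain ⟨v1, v2, v3⟩ := hV
  obtain ⟨he1, he2⟩ := abs_le.mp he
  interval_cases e <;> simp_all

lemma isOpenEq (j : ℤ) (c : Fin 2) : IsOpen {ξ : ℤ → Fin 2 | ξ j = c} := by
  have h : {ξ : ℤ → Fin 2 | ξ j = c} = (fun ξ : ℤ → Fin 2 => ξ j) ⁻¹' {c} := rfl
  rw [h]; exact (isOpen_discrete _).preimage (continuous_apply j)

lemma isOpen3 (c : Fin 2) : IsOpen {ξ : ℤ → Fin 2 | ξ (-1) = c ∧ ξ 0 = c ∧ ξ 1 = c} := by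
  have : {ξ : ℤ → Fin 2 | ξ (-1) = c ∧ ξ 0 = c ∧ ξ 1 = c}
      = {ξ : ℤ → Fin 2 | ξ (-1) = c} ∩ ({ξ | ξ 0 = c} ∩ {ξ | ξ 1 = c}) := rfl
  rw [this]
  exact (isOpenEq _ _).inter ((isOpenEq _ _).inter (isOpenEq _ _))

/-- The small cylinder used in the density argument. -/
def cyl5 (c : Fin 2) : Set (ℤ → Fin 2) :=
  {ξ | ξ (-2) = c ∧ ξ (-1) = c ∧ ξ 0 = c ∧ ξ 1 = c ∧ ξ 2 = c}

lemma isOpen_cyl5 (c : Fin 2) : IsOpen (cyl5 c) := by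
  have : cyl5 c = {ξ : ℤ → Fin 2 | ξ (-2) = c} ∩ ({ξ | ξ (-1) = c} ∩ ({ξ | ξ 0 = c}
      ∩ ({ξ | ξ 1 = c} ∩ {ξ | ξ 2 = c}))) := rfl
  rw [this]
  exact (isOpenEq _ _).inter ((isOpenEq _ _).inter ((isOpenEq _ _).inter
    ((isOpenEq _ _).inter (isOpenEq _ _))))

lemma cyl5_nonempty (c : Fin 2) : (cyl5 c).Nonempty :=
  ⟨fun _ => c, rfl, rfl, rfl, rfl, rfl⟩

/-- If `τ^e x ∈ cyl5 c` with `|e| ≤ 2`, then `x 0 = c`. -/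
lemma mem_cyl5 (x : ℤ → Fin 2) (e : ℤ) (he : |e| ≤ 2)
    (h : (fun n => x (n + e)) ∈ cyl5 c) : x 0 = c := by
  obtain ⟨h1, h2, h3, h4, h5⟩ := h
  obtain ⟨he1, he2⟩ := abs_le.mp he
  interval_cases e <;> simp_all

/-- For the IFS `({0,1}^ℤ, {τ, τ⁻¹}, Σ)` with `Σ` the SFT generated by the blocks `01` and
`10`: for every nonempty word `w` of the language, `f_w⁻¹(U) ∩ V = ∅`; in particular the IFS
is neither point transitive nor topologically transitive. -/
theorem stmt14 :
    (∀ w : List (Fin 2), w ≠ [] → (∃ ξ : ℤ → Fin 2, isBlockConcat ξ ∧ occursInZ w ξ) →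
      (applyWord shiftIFS w) ⁻¹' cylU ∩ cylV = ∅) ∧
    (¬ ∃ x : ℤ → Fin 2, Dense {y : ℤ → Fin 2 |
        ∃ w : List (Fin 2), (∃ ξ : ℤ → Fin 2, isBlockConcat ξ ∧ occursInZ w ξ) ∧
          applyWord shiftIFS w x = y}) ∧
    ¬ ∀ U V : Set (ℤ → Fin 2), IsOpen U → U.Nonempty → IsOpen V → V.Nonempty →
      ∃ w : List (Fin 2), (∃ ξ : ℤ → Fin 2, isBlockConcat ξ ∧ occursInZ w ξ) ∧
        ((applyWord shiftIFS w) '' U ∩ V).Nonempty := by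
  refine ⟨?_, ?_, ?_⟩
  · intro w _ hw
    rw [Set.eq_empty_iff_forall_notMem]
    rintro x ⟨hU, hV⟩
    rw [Set.mem_preimage, applyWord_shift] at hU
    exact core x (ew w) (ew_bound w hw) hU hV
  · rintro ⟨x, hD⟩
    obtain ⟨y0, ⟨w0, hw0, hy0⟩, hm0⟩ :=
      hD.exists_mem_open (isOpen_cyl5 0) (cyl5_nonempty 0)
    obtain ⟨y1, ⟨w1, hw1, hy1⟩, hm1⟩ :=
      hD.exists_mem_open (isOpen_cyl5 1) (cyl5_nonempty 1)
    rw [← hy0, applyWord_shift] at hm0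
    rw [← hy1, applyWord_shift] at hm1
    have h0 : x 0 = 0 := mem_cyl5 x (ew w0) (ew_bound w0 hw0) hm0
    have h1 : x 0 = 1 := mem_cyl5 x (ew w1) (ew_bound w1 hw1) hm1
    rw [h0] at h1
    exact absurd h1 (by decide)
  · intro H
    obtain ⟨w, hw, y, ⟨x, hxV, hfx⟩, hyU⟩ :=
      H cylV cylU (isOpen3 1) ⟨fun _ => 1, rfl, rfl, rfl⟩ (isOpen3 0) ⟨fun _ => 0, rfl, rfl, rfl⟩
    rw [applyWord_shift] at hfx
    rw [← hfx] at hyU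
    exact core x (ew w) (ew_bound w hw) hyU hxV
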